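/- arXiv:1501.06508 — 2 statements merged into one kernel-verified Lean document; each statement's English description precedes it below -/
import Mathlib

section
/- If every ADT state reachable from the initial state has exactly one memory representation, then the map from reachable ADT states to machine states induced by m is a graph isomorphism between the reachable part of the ADT state transition graph and the reachable part of the data structure state transition graph: there is an edge labeled (o, i, τ) from s to s' in the ADT graph iff there is an edge labeled (γ(o), α(i), β(τ)) from m(s) to m(s') in the data structure graph. -/
/-- If every reachable ADT state has exactly one memory representation
(m injective on reachable states) then m induces a graph isomorphism between the
reachable parts of the ADT and data structure state transition graphs: there is an
edge labeled (o, i, τ) from s to s' iff there is an edge labeled (γ(o), α(i), β(τ))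
from m(s) to m(s'). -/
theorem stmt_14 {S Op Inp Out MS MInp MOut : Type*}
    (adt : S → Op → Inp → S × Out)
    (γprog : Op → MS → MInp → MS × MOut)
    (Reach : S → Prop)
    (m : S → MS) (α : Inp → MInp) (β : Out → MOut)
    (hα : Function.Injective α) (hβ : Function.Injective β)
    (hm : ∀ s s', Reach s → Reach s' → m s = m s' → s = s')
    (hReachStep : ∀ s o i, Reach s → Reach (adt s o i).1)
    (hcons : ∀ s o i s' τ, adt s o i = (s', τ) → γprog o (m s) (α i) = (m s', β τ)) :
    ∀ s s', Reach s → Reach s' → ∀ (o : Op) (i : Inp) (τ : Out),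
      (adt s o i = (s', τ) ↔ γprog o (m s) (α i) = (m s', β τ)) := by
  intro s s' hs hs' o i τ
  constructor
  · exact fun h => hcons s o i s' τ h
  · intro h
    have h2 := hcons s o i (adt s o i).1 (adt s o i).2 rfl
    rw [h] at h2
    have hst : m (adt s o i).1 = m s' := (Prod.mk.injEq _ _ _ _ ▸ h2).1.symm
    have hτ : β (adt s o i).2 = β τ := (Prod.mk.injEq _ _ _ _ ▸ h2).2.symm
    have := hm _ _ (hReachStep s o i hs) hs' hst
    exact Prod.ext this (hβ hτ)
end

section
/- In the Gale–Shapley stable marriage setting with n men and n women each having strict complete preference lists, if the men propose in decreasing order of their preferences, the resulting stable matching is unique regardless of the order in which unmatched men are chosen to propose: any two executions of men-proposing deferred acceptance produce the same matching, namely the man-optimal stable matching. -/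
/-- State of men-proposing deferred acceptance: for each man, the number of proposals
he has made so far (he proposes in decreasing order of his preferences); for each
woman, the man she currently holds, if any. -/
abbrev GSState (n : ℕ) := (Fin n → ℕ) × (Fin n → Option (Fin n))

/-- A man is unmatched if no woman currently holds him. -/
def GSUnmatched {n : ℕ} (held : Fin n → Option (Fin n)) (m : Fin n) : Prop :=
  ∀ w, held w ≠ some m

/-- One step of men-proposing deferred acceptance: some unmatched man m (with
proposals remaining) proposes to the next woman w on his list (`mlist m` enumerates
his choices in decreasing order of preference). If w is free she holds m; if she
holds m' she switches to m exactly when she ranks m better (smaller `wrank`). -/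
def GSStep {n : ℕ} (mlist : Fin n → Fin n → Fin n) (wrank : Fin n → Fin n → Fin n)
    (st st' : GSState n) : Prop :=
  ∃ (m : Fin n) (h : st.1 m < n),
    GSUnmatched st.2 m ∧
    st'.1 = Function.update st.1 m (st.1 m + 1) ∧
    (let w := mlist m ⟨st.1 m, h⟩
     (st.2 w = none ∧ st'.2 = Function.update st.2 w (some m)) ∨
     (∃ m', st.2 w = some m' ∧
       ((wrank w m < wrank w m' ∧ st'.2 = Function.update st.2 w (some m)) ∨
        (¬ wrank w m < wrank w m' ∧ st'.2 = st.2))))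

/-- Initial state: no proposals made, every woman free. -/
def GSInit (n : ℕ) : GSState n := (fun _ => 0, fun _ => none)

/-- Deterministic version of a step by a given man. -/
def doStep {n : ℕ} (mlist : Fin n → Fin n → Fin n) (wrank : Fin n → Fin n → Fin n)
    (st : GSState n) (m : Fin n) (h : st.1 m < n) : GSState n :=
  (Function.update st.1 m (st.1 m + 1),
   let w := mlist m ⟨st.1 m, h⟩
   match st.2 w with
   | none => Function.update st.2 w (some m)
   | some m' => if wrank w m < wrank w m' then Function.update st.2 w (some m) else st.2)

lemma gsStep_iff {n : ℕ} (mlist wrank : Fin n → Fin n → Fin n) (st st' : GSState n) :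
    GSStep mlist wrank st st' ↔
      ∃ (m : Fin n) (h : st.1 m < n), GSUnmatched st.2 m ∧
        st' = doStep mlist wrank st m h := by
  constructor
  · rintro ⟨m, h, hu, h1, h2⟩
    refine ⟨m, h, hu, ?_⟩
    refine Prod.ext h1 ?_
    simp only [doStep]
    cases hsw : st.2 (mlist m ⟨st.1 m, h⟩) with
    | none =>
        simp only [hsw] at h2 ⊢
        rcases h2 with ⟨_, h2⟩ | ⟨m', hm', _⟩
        · exact h2
        · simp at hm'
    | some m0 =>
        simp only [hsw] at h2 ⊢
        rcases h2 with ⟨h0, _⟩ | ⟨m', hm', hc⟩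
        · exact absurd h0 (by simp)
        · cases hm'
          rcases hc with ⟨hlt, h2⟩ | ⟨hlt, h2⟩
          · rw [if_pos hlt]; exact h2
          · rw [if_neg hlt]; exact h2
  · rintro ⟨m, h, hu, rfl⟩
    refine ⟨m, h, hu, rfl, ?_⟩
    simp only [doStep]
    cases hsw : st.2 (mlist m ⟨st.1 m, h⟩) with
    | none => left; exact ⟨rfl, by simp [hsw]⟩
    | some m0 =>
        right
        refine ⟨m0, rfl, ?_⟩
        by_cases hlt : wrank (mlist m ⟨st.1 m, h⟩) m < wrank (mlist m ⟨st.1 m, h⟩) m0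
        · left; exact ⟨hlt, by simp [hsw, hlt]⟩
        · right; exact ⟨hlt, by simp [hsw, hlt]⟩

/-- The effect of one proposal on the held function. -/
def heldStep {n : ℕ} (wrank : Fin n → Fin n → Fin n) (f : Fin n → Option (Fin n))
    (m w : Fin n) : Fin n → Option (Fin n) :=
  match f w with
  | none => Function.update f w (some m)
  | some m' => if wrank w m < wrank w m' then Function.update f w (some m) else f

lemma heldStep_apply {n : ℕ} (wrank : Fin n → Fin n → Fin n) (f : Fin n → Option (Fin n))
    (m w x : Fin n) :
    heldStep wrank f m w x =
      if x = w then
        (match f w with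
         | none => some m
         | some m' => if wrank w m < wrank w m' then some m else some m')
      else f x := by
  unfold heldStep
  cases hf : f w with
  | none =>
      by_cases hx : x = w
      · subst hx; simp
      · simp [Function.update_of_ne hx, hx]
  | some m0 =>
      by_cases hx : x = w
      · subst hx
        by_cases hlt : wrank x m < wrank x m0 <;> simp [hlt, hf]
      · by_cases hlt : wrank w m < wrank w m0 <;> simp [hlt, hx, Function.update_of_ne hx]

lemma heldStep_comm {n : ℕ} (wrank : Fin n → Fin n → Fin n)
    (hw : ∀ w, Function.Injective (wrank w)) (f : Fin n → Option (Fin n))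
    (m1 m2 w1 w2 : Fin n) (hne : m1 ≠ m2) :
    heldStep wrank (heldStep wrank f m1 w1) m2 w2 =
      heldStep wrank (heldStep wrank f m2 w2) m1 w1 := by
  funext x
  by_cases hwe : w1 = w2
  · subst hwe
    have hr : wrank w1 m1 ≠ wrank w1 m2 := fun h => hne (hw w1 h)
    simp only [heldStep_apply, if_pos rfl]
    by_cases hx : x = w1
    · simp only [hx, if_pos rfl]
      cases hf : f w1 with
      | none =>
          rcases hr.lt_or_gt with h12 | h21
          · simp [h12, lt_asymm h12]
          · simp [h21, lt_asymm h21]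
      | some m0 =>
          rcases hr.lt_or_gt with h12 | h21
          · by_cases c10 : wrank w1 m1 < wrank w1 m0 <;>
              by_cases c20 : wrank w1 m2 < wrank w1 m0 <;>
              simp [c10, c20, h12, lt_asymm h12, not_lt_of_gt h12]
            exact absurd (h12.trans c20) c10
          · by_cases c10 : wrank w1 m1 < wrank w1 m0 <;>
              by_cases c20 : wrank w1 m2 < wrank w1 m0 <;>
              simp [c10, c20, h21, lt_asymm h21, not_lt_of_gt h21]
            exact absurd (h21.trans c10) c20
    · simp [hx]
  · simp only [heldStep_apply, if_neg hwe, if_neg (Ne.symm hwe)]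
    by_cases hx1 : x = w1 <;> by_cases hx2 : x = w2 <;>
      first
        | simp [hx1, hx2, hwe, Ne.symm hwe]
        | exact absurd (hx1.symm.trans hx2) hwe

lemma doStep_snd {n : ℕ} (mlist wrank : Fin n → Fin n → Fin n) (st : GSState n)
    (m : Fin n) (h : st.1 m < n) :
    (doStep mlist wrank st m h).2 = heldStep wrank st.2 m (mlist m ⟨st.1 m, h⟩) := rfl

lemma unmatched_doStep {n : ℕ} (mlist wrank : Fin n → Fin n → Fin n) (st : GSState n)
    (m1 m2 : Fin n) (h1 : st.1 m1 < n) (hne : m1 ≠ m2)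
    (hu2 : GSUnmatched st.2 m2) :
    GSUnmatched (doStep mlist wrank st m1 h1).2 m2 := by
  intro w
  rw [doStep_snd, heldStep_apply]
  set w1 := mlist m1 ⟨st.1 m1, h1⟩ with hw1
  by_cases hx : w = w1
  · rw [if_pos hx]
    cases hf : st.2 w1 with
    | none => simpa using fun h => hne h
    | some m0 =>
        have : m0 ≠ m2 := fun h => hu2 w1 (h ▸ hf)
        by_cases hlt : wrank w1 m1 < wrank w1 m0 <;> simp [hlt, hne, this]
  · rw [if_neg hx]; exact hu2 w

lemma doStep_comm {n : ℕ} (mlist wrank : Fin n → Fin n → Fin n)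
    (hw : ∀ w, Function.Injective (wrank w)) (st : GSState n)
    (m1 m2 : Fin n) (hne : m1 ≠ m2) (h1 : st.1 m1 < n) (h2 : st.1 m2 < n)
    (h2' : (doStep mlist wrank st m1 h1).1 m2 < n)
    (h1' : (doStep mlist wrank st m2 h2).1 m1 < n) :
    doStep mlist wrank (doStep mlist wrank st m1 h1) m2 h2' =
      doStep mlist wrank (doStep mlist wrank st m2 h2) m1 h1' := by
  have e2 : (doStep mlist wrank st m1 h1).1 m2 = st.1 m2 :=
    Function.update_of_ne (Ne.symm hne) _ _
  have e1 : (doStep mlist wrank st m2 h2).1 m1 = st.1 m1 :=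
    Function.update_of_ne hne _ _
  have f2 : (⟨(doStep mlist wrank st m1 h1).1 m2, h2'⟩ : Fin n) = ⟨st.1 m2, h2⟩ :=
    Fin.ext e2
  have f1 : (⟨(doStep mlist wrank st m2 h2).1 m1, h1'⟩ : Fin n) = ⟨st.1 m1, h1⟩ :=
    Fin.ext e1
  refine Prod.ext ?_ ?_
  · show Function.update (doStep mlist wrank st m1 h1).1 m2 _ =
      Function.update (doStep mlist wrank st m2 h2).1 m1 _
    rw [e2, e1]
    show Function.update (Function.update st.1 m1 (st.1 m1 + 1)) m2 (st.1 m2 + 1) =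
      Function.update (Function.update st.1 m2 (st.1 m2 + 1)) m1 (st.1 m1 + 1)
    exact Function.update_comm hne _ _ _
  · simp only [doStep_snd]
    rw [f1, f2]
    exact heldStep_comm wrank hw st.2 m1 m2 _ _ hne

/-- with strict complete preference lists, any two executions of
men-proposing deferred acceptance (arbitrary nondeterministic choice of which
unmatched man proposes) reach the same final matching. -/
theorem stmt_17 (n : ℕ) (mlist : Fin n → Fin n → Fin n) (wrank : Fin n → Fin n → Fin n)
    (hm : ∀ m, Function.Bijective (mlist m))
    (hw : ∀ w, Function.Injective (wrank w))
    (st₁ st₂ : GSState n)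
    (h₁ : Relation.ReflTransGen (GSStep mlist wrank) (GSInit n) st₁)
    (h₂ : Relation.ReflTransGen (GSStep mlist wrank) (GSInit n) st₂)
    (t₁ : ∀ st, ¬ GSStep mlist wrank st₁ st)
    (t₂ : ∀ st, ¬ GSStep mlist wrank st₂ st) :
    st₁.2 = st₂.2 := by
  have key : ∀ a b c, GSStep mlist wrank a b → GSStep mlist wrank a c →
      ∃ d, Relation.ReflGen (GSStep mlist wrank) b d ∧
        Relation.ReflTransGen (GSStep mlist wrank) c d := by
    intro a b c hb hc
    rw [gsStep_iff] at hb hc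
    obtain ⟨m1, hlt1, hu1, rfl⟩ := hb
    obtain ⟨m2, hlt2, hu2, rfl⟩ := hc
    by_cases hmm : m1 = m2
    · subst hmm
      exact ⟨_, Relation.ReflGen.refl, Relation.ReflTransGen.refl⟩
    · have h2' : (doStep mlist wrank a m1 hlt1).1 m2 < n := by
        rw [show (doStep mlist wrank a m1 hlt1).1 m2 = a.1 m2 from
          Function.update_of_ne (Ne.symm hmm) _ _]
        exact hlt2
      have h1' : (doStep mlist wrank a m2 hlt2).1 m1 < n := by
        rw [show (doStep mlist wrank a m2 hlt2).1 m1 = a.1 m1 from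
          Function.update_of_ne hmm _ _]
        exact hlt1
      refine ⟨doStep mlist wrank (doStep mlist wrank a m1 hlt1) m2 h2', ?_, ?_⟩
      · exact Relation.ReflGen.single ((gsStep_iff _ _ _ _).2
          ⟨m2, h2', unmatched_doStep _ _ _ _ _ _ hmm hu2, rfl⟩)
      · refine Relation.ReflTransGen.single ((gsStep_iff _ _ _ _).2
          ⟨m1, h1', unmatched_doStep _ _ _ _ _ _ (Ne.symm hmm) hu1, ?_⟩)
        exact doStep_comm mlist wrank hw a m1 m2 hmm hlt1 hlt2 h2' h1'
  obtain ⟨d, r1, r2⟩ := Relation.church_rosser key h₁ h₂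
  have e1 : st₁ = d := by
    rcases (Relation.ReflTransGen.cases_head r1) with h | ⟨c, hc, -⟩
    · exact h
    · exact absurd hc (t₁ c)
  have e2 : st₂ = d := by
    rcases (Relation.ReflTransGen.cases_head r2) with h | ⟨c, hc, -⟩
    · exact h
    · exact absurd hc (t₂ c)
  rw [e1, e2]
end
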